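/- If x(t) solves the linear SDE dy = y(\bar{λ} dx + λ d\bar{x}), y₀ = 1, for a conformal continuous local martingale x with x₀ = 0, then y_t = exp(\bar{λ} x_t + λ \bar{x}_t − |λ|² ⟨x, \bar{x}⟩_t). Equivalently (deterministic version): for fixed complex z and real ρ ≥ 0, the function f(λ) = exp(λ\bar{z} + \bar{λ}z − ρ|λ|²) has Taylor coefficients (in \bar{λ}^m λ^n) equal to J_{m,n}(z,ρ)/(m! n!): for every λ ∈ ℂ, exp(λ\bar{z} + \bar{λ}z − ρ|λ|²) = Σ_{m,n≥0} (\bar{λ}^m λ^n)/(m! n!) J_{m,n}(z,ρ), with absolute convergence of the double series. -/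

import Mathlib

/-!
Write the exponential as `exp (λ̄ z) · exp (λ z̄) · exp (-ρ |λ|²)`, a product of three absolutely
convergent exponential series indexed by `(i, j, r)`. Its `(i, j, r)` term is a multiple of
`λ̄ ^ (i + r) λ ^ (j + r)`, so grouping the triple series along the injective shift
`(i, j, r) ↦ (i + r, j + r)` gives a double series whose `(m, n)` coefficient is the finite sum over
`r ≤ min m n` defining `J_{m,n}(z, ρ) / (m! n!)`. Absolute convergence of the double series is
inherited from that of the triple one.
-/

open Finset Nat ComplexConjugate

noncomputable def hermiteJ (m n : ℕ) (z : ℂ) (ρ : ℝ) : ℂ :=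
  ∑ r ∈ Finset.range (min m n + 1),
    (-1 : ℂ) ^ r * (r.factorial : ℂ) * (m.choose r : ℂ) * (n.choose r : ℂ) *
      z ^ (m - r) * (starRingEnd ℂ z) ^ (n - r) * (ρ : ℂ) ^ r

theorem HasSum.sum_range_min_sub {α : Type*} [AddCommMonoid α] [TopologicalSpace α]
    [ContinuousAdd α] [RegularSpace α] {f : (ℕ × ℕ) × ℕ → α} {a : α} (hf : HasSum f a) :
    HasSum (fun p : ℕ × ℕ => ∑ r ∈ range (min p.1 p.2 + 1), f ((p.1 - r, p.2 - r), r)) a := by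
  let shift : (ℕ × ℕ) × ℕ → (ℕ × ℕ) × ℕ := fun q => ((q.1.1 + q.2, q.1.2 + q.2), q.2)
  have hshift : shift.Injective := by
    rintro ⟨⟨i, j⟩, r⟩ ⟨⟨i', j'⟩, r'⟩ h
    simp only [shift, Prod.mk.injEq] at h
    obtain ⟨⟨hi, hj⟩, rfl⟩ := h
    simp_all
  refine ((hasSum_extend_zero hshift).2 hf).prod_fiberwise fun ⟨m, n⟩ => ?_
  dsimp only
  have hzero : ∀ r ∉ range (min m n + 1), Function.extend shift f 0 ((m, n), r) = 0 := by
    refine fun r hr => Function.extend_apply' _ _ _ ?_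
    rintro ⟨⟨⟨i, j⟩, s⟩, h⟩
    simp only [shift, Prod.mk.injEq] at h
    simp only [mem_range] at hr
    omega
  convert hasSum_sum_of_ne_finset_zero (L := .unconditional ℕ) hzero using 1
  refine sum_congr rfl fun r hr => ?_
  have hshift_sub : shift ((m - r, n - r), r) = ((m, n), r) := by
    simp only [mem_range] at hr
    simp only [shift, Prod.mk.injEq, and_true]
    omega
  rw [← hshift_sub, hshift.extend_apply]

theorem Summable.norm_sum_range_min_sub {E : Type*} [SeminormedAddCommGroup E]
    {f : (ℕ × ℕ) × ℕ → E} (hf : Summable fun q => ‖f q‖) :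
    Summable fun p : ℕ × ℕ => ‖∑ r ∈ range (min p.1 p.2 + 1), f ((p.1 - r, p.2 - r), r)‖ :=
  hf.hasSum.sum_range_min_sub.summable.of_nonneg_of_le (fun _ => norm_nonneg _)
    fun _ => norm_sum_le _ _

section ExpSeriesTriple

open NormedSpace

variable {𝔸 : Type*} [NormedDivisionRing 𝔸] [NormedAlgebra ℚ 𝔸] (a b c : 𝔸)

theorem summable_norm_expSeries_div_mul_mul :
    Summable fun q : (ℕ × ℕ) × ℕ =>
      ‖a ^ q.1.1 / q.1.1 ! * (b ^ q.1.2 / q.1.2 !) * (c ^ q.2 / q.2 !)‖ :=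
  Summable.mul_norm (f := fun p : ℕ × ℕ => a ^ p.1 / p.1 ! * (b ^ p.2 / p.2 !))
    (g := fun n => c ^ n / n !)
    (Summable.mul_norm (f := fun n => a ^ n / n !) (g := fun n => b ^ n / n !)
      (norm_expSeries_div_summable a) (norm_expSeries_div_summable b))
    (norm_expSeries_div_summable c)

theorem expSeries_div_mul_mul_hasSum_exp_mul_exp_mul_exp [CompleteSpace 𝔸] :
    HasSum (fun q : (ℕ × ℕ) × ℕ => a ^ q.1.1 / q.1.1 ! * (b ^ q.1.2 / q.1.2 !) * (c ^ q.2 / q.2 !))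
      (exp a * exp b * exp c) :=
  have hab := summable_mul_of_summable_norm (f := fun n => a ^ n / n !)
    (g := fun n => b ^ n / n !) (norm_expSeries_div_summable a) (norm_expSeries_div_summable b)
  HasSum.mul (f := fun p : ℕ × ℕ => a ^ p.1 / p.1 ! * (b ^ p.2 / p.2 !))
    (g := fun n => c ^ n / n !)
    (HasSum.mul (f := fun n => a ^ n / n !) (g := fun n => b ^ n / n !)
      (expSeries_div_hasSum_exp a) (expSeries_div_hasSum_exp b) hab)
    (expSeries_div_hasSum_exp c) (summable_norm_expSeries_div_mul_mul a b c).of_norm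

end ExpSeriesTriple

theorem conj_pow_mul_pow_div_mul_hermiteJ (l z : ℂ) (ρ : ℝ) (m n : ℕ) :
    conj l ^ m * l ^ n / (m ! * n ! : ℂ) * hermiteJ m n z ρ =
      ∑ r ∈ range (min m n + 1), (conj l * z) ^ (m - r) / (m - r)! *
        ((l * conj z) ^ (n - r) / (n - r)!) * ((-ρ * ‖l‖ ^ 2 : ℂ) ^ r / r !) := by
  rw [hermiteJ, mul_sum]
  refine sum_congr rfl fun r hr => ?_
  have hr : r ≤ m ∧ r ≤ n := by simp only [mem_range] at hr; omega
  obtain ⟨i, rfl⟩ : ∃ i, m = i + r := ⟨m - r, by omega⟩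
  obtain ⟨j, rfl⟩ : ∃ j, n = j + r := ⟨n - r, by omega⟩
  rw [Nat.cast_choose ℂ hr.1, Nat.cast_choose ℂ hr.2, ← Complex.mul_conj']
  simp only [Nat.add_sub_cancel]
  field_simp [Nat.factorial_ne_zero]
  ring

theorem hermiteJ_generating_function_general (z : ℂ) (ρ : ℝ) (l : ℂ) :
    HasSum
      (fun p : ℕ × ℕ =>
        (starRingEnd ℂ l) ^ p.1 * l ^ p.2 / ((p.1.factorial : ℂ) * (p.2.factorial : ℂ))
          * hermiteJ p.1 p.2 z ρ)
      (Complex.exp (l * starRingEnd ℂ z + starRingEnd ℂ l * z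
        - (ρ : ℂ) * (‖l‖ : ℂ) ^ 2)) ∧
    Summable
      (fun p : ℕ × ℕ =>
        ‖(starRingEnd ℂ l) ^ p.1 * l ^ p.2 / ((p.1.factorial : ℂ) * (p.2.factorial : ℂ))
          * hermiteJ p.1 p.2 z ρ‖) := by
  have hexp : l * conj z + conj l * z - ρ * ‖l‖ ^ 2 = conj l * z + l * conj z + -ρ * ‖l‖ ^ 2 := by
    ring
  simp_rw [conj_pow_mul_pow_div_mul_hermiteJ, hexp, Complex.exp_add, Complex.exp_eq_exp_ℂ]
  exact ⟨(expSeries_div_mul_mul_hasSum_exp_mul_exp_mul_exp (conj l * z) (l * conj z)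
      (-ρ * ‖l‖ ^ 2 : ℂ)).sum_range_min_sub,
    (summable_norm_expSeries_div_mul_mul (conj l * z) (l * conj z)
      (-ρ * ‖l‖ ^ 2 : ℂ)).norm_sum_range_min_sub⟩

/-- deterministic generating-function identity: for every `λ ∈ ℂ`,
`exp(λ z̄ + λ̄ z − ρ|λ|²) = Σ_{m,n≥0} (λ̄^m λ^n)/(m! n!) J_{m,n}(z,ρ)`, the double series
converging absolutely. -/
theorem hermiteJ_generating_function (z : ℂ) (ρ : ℝ) (hρ : 0 ≤ ρ) (l : ℂ) :
    HasSum
      (fun p : ℕ × ℕ =>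
        (starRingEnd ℂ l) ^ p.1 * l ^ p.2 / ((p.1.factorial : ℂ) * (p.2.factorial : ℂ))
          * hermiteJ p.1 p.2 z ρ)
      (Complex.exp (l * starRingEnd ℂ z + starRingEnd ℂ l * z
        - (ρ : ℂ) * (‖l‖ : ℂ) ^ 2)) ∧
    Summable
      (fun p : ℕ × ℕ =>
        ‖(starRingEnd ℂ l) ^ p.1 * l ^ p.2 / ((p.1.factorial : ℂ) * (p.2.factorial : ℂ))
          * hermiteJ p.1 p.2 z ρ‖) :=
  hermiteJ_generating_function_general z ρ l
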